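/- Let d ≥ K ≥ 2, n ≥ 1, λ_W > 0, λ_H > 0, c := K√(nλ_H λ_W) ≤ 1, and ρ := ((1−c)(K−1)/K)·√(λ_W/(nλ_H)). If (W*, H*, b*) is a global minimizer of g(W,H,b) := (1/(2Kn))‖WH + b·1_Nᵀ − Y‖_F² + (λ_W/2)‖W‖_F² + (λ_H/2)‖H‖_F² over W ∈ ℝ^{K×d}, H ∈ ℝ^{d×Kn}, b ∈ ℝ^K, then W*W*ᵀ = (nλ_H/λ_W)·ρ·(K/(K−1))·(I_K − (1/K)·1_K·1_Kᵀ) and W*H* = √(nλ_H/λ_W)·ρ·(K/(K−1))·((I_K − (1/K)·1_K·1_Kᵀ) ⊗ 1_nᵀ). -/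

import Mathlib

open Matrix Finset

noncomputable section

/-!
Let `B = (I_K - 1_K 1_Kᵀ / K) ⊗ 1_nᵀ` be the centred labels. Then `B Bᵀ B = n B`,
`⟨Y, B⟩ = ‖B‖² = n (K - 1)`, and `B` is orthogonal to every bias term `b 1ᵀ`. With `s = √λ_W` and
`t = √(λ_H / n)`, so that `c = K n s t`, completing squares gives
`g = ‖WH + b1ᵀ - Y + cB‖² / (2Kn) + ‖s Wᵀ - t H Bᵀ‖² / 2 + (λ_H / 2) ‖H - H BᵀB / n‖²
  + c (K - 1) / K - c² (K - 1) / (2K)`.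
For `c ≤ 1` a point built from `B` makes all three squares vanish, so they vanish at every global
minimizer. The last one says that `H` is fixed by the projection `BᵀB / n`, which kills `b 1ᵀ`; the
first then gives `WH = (1 - c) B`, and the second turns this into
`W Wᵀ = (t / s) (1 - c) B Bᵀ = (t / s) (1 - c) n (I_K - 1_K 1_Kᵀ / K)`.
-/

/-- Squared Frobenius norm of a real matrix. -/
def frobSq {m n : Type*} [Fintype m] [Fintype n] (A : Matrix m n ℝ) : ℝ :=
  ∑ i, ∑ j, (A i j) ^ 2

section Frobenius

variable {m n : Type*} [Fintype m] [Fintype n]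

theorem frobSq_eq_trace (A : Matrix m n ℝ) : frobSq A = trace (A * Aᵀ) := by
  simp [frobSq, trace, mul_apply, sq]

theorem frobSq_nonneg (A : Matrix m n ℝ) : 0 ≤ frobSq A := by
  unfold frobSq; positivity

theorem frobSq_eq_zero_iff {A : Matrix m n ℝ} : frobSq A = 0 ↔ A = 0 := by
  rw [frobSq_eq_trace, ← conjTranspose_eq_transpose_of_trivial,
    trace_mul_conjTranspose_self_eq_zero_iff]

theorem trace_mul_transpose_comm (A B : Matrix m n ℝ) : trace (B * Aᵀ) = trace (A * Bᵀ) := by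
  rw [← trace_transpose, transpose_mul, transpose_transpose]

theorem frobSq_add (A B : Matrix m n ℝ) :
    frobSq (A + B) = frobSq A + 2 * trace (A * Bᵀ) + frobSq B := by
  simp only [frobSq_eq_trace, transpose_add, Matrix.add_mul, Matrix.mul_add, trace_add,
    trace_mul_transpose_comm A B]
  ring

theorem frobSq_sub (A B : Matrix m n ℝ) :
    frobSq (A - B) = frobSq A - 2 * trace (A * Bᵀ) + frobSq B := by
  simp only [frobSq_eq_trace, transpose_sub, Matrix.sub_mul, Matrix.mul_sub, trace_sub,
    trace_mul_transpose_comm A B]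
  ring

theorem frobSq_smul (r : ℝ) (A : Matrix m n ℝ) : frobSq (r • A) = r ^ 2 * frobSq A := by
  simp [frobSq, mul_pow, mul_sum]

theorem frobSq_transpose (A : Matrix m n ℝ) : frobSq Aᵀ = frobSq A := by
  rw [frobSq, Finset.sum_comm]
  rfl

theorem submatrix_one_mul_transpose {l q : Type*} [Fintype q] [DecidableEq l] [DecidableEq q]
    {e : l → q} (he : Function.Injective e) :
    (1 : Matrix q q ℝ).submatrix e id * ((1 : Matrix q q ℝ).submatrix e id)ᵀ = 1 := by
  rw [transpose_submatrix, transpose_one, ← submatrix_mul _ _ e id e Function.bijective_id,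
    Matrix.one_mul, submatrix_one e he]

end Frobenius

section Projection

variable {l m n q : Type*} [Fintype l] [Fintype m] [Fintype n] [Fintype q]

theorem frobSq_sub_inv_smul_mul_transpose_mul {B : Matrix l n ℝ} {μ : ℝ} (hμ : μ ≠ 0)
    (hB : B * Bᵀ * B = μ • B) (H : Matrix m n ℝ) :
    frobSq (H - μ⁻¹ • (H * Bᵀ * B)) = frobSq H - μ⁻¹ * frobSq (H * Bᵀ) := by
  have hcross : trace (H * (H * Bᵀ * B)ᵀ) = frobSq (H * Bᵀ) := by
    simp only [frobSq_eq_trace, transpose_mul, transpose_transpose, Matrix.mul_assoc]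
  have hsq : frobSq (H * Bᵀ * B) = μ * frobSq (H * Bᵀ) := by
    have : H * Bᵀ * B * (H * Bᵀ * B)ᵀ = μ • (H * Bᵀ * (H * Bᵀ)ᵀ) := by
      simp only [transpose_mul, transpose_transpose, Matrix.mul_assoc]
      rw [← Matrix.mul_assoc B Bᵀ, ← Matrix.mul_assoc (B * Bᵀ) B, hB, Matrix.smul_mul,
        Matrix.mul_smul, Matrix.mul_smul]
    rw [frobSq_eq_trace, this, trace_smul, frobSq_eq_trace, smul_eq_mul]
  rw [frobSq_sub, transpose_smul, Matrix.mul_smul, trace_smul, hcross, frobSq_smul, hsq,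
    smul_eq_mul]
  field_simp
  ring

theorem regularizer_sub_trace_eq_sum_frobSq {B : Matrix l n ℝ} {μ : ℝ} (hμ : μ ≠ 0)
    (hB : B * Bᵀ * B = μ • B) (s t : ℝ) (W : Matrix l q ℝ) (H : Matrix q n ℝ) :
    s ^ 2 * frobSq W + μ * t ^ 2 * frobSq H - 2 * s * t * trace (W * H * Bᵀ)
      = frobSq (s • Wᵀ - t • (H * Bᵀ)) + μ * t ^ 2 * frobSq (H - μ⁻¹ • (H * Bᵀ * B)) := by
  have hcross : trace (Wᵀ * (H * Bᵀ)ᵀ) = trace (W * H * Bᵀ) := by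
    rw [← trace_transpose]
    simp only [transpose_mul, transpose_transpose]
    rw [trace_mul_cycle]
  rw [frobSq_sub, frobSq_smul, frobSq_smul, frobSq_transpose, transpose_smul,
    Matrix.smul_mul, Matrix.mul_smul, trace_smul, trace_smul, hcross,
    frobSq_sub_inv_smul_mul_transpose_mul hμ hB]
  simp only [smul_eq_mul]
  field_simp
  ring

end Projection

section Labels

variable (K n : ℕ)

def oneHot : Matrix (Fin K) (Fin K × Fin n) ℝ := of fun k p => if p.1 = k then 1 else 0

def centering : Matrix (Fin K) (Fin K) ℝ := 1 - (1 / (K : ℝ)) • of fun _ _ => 1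

def centeredLabels : Matrix (Fin K) (Fin K × Fin n) ℝ := centering K * oneHot K n

variable {K n}

theorem oneHot_mul_transpose : oneHot K n * (oneHot K n)ᵀ = (n : ℝ) • 1 := by
  ext k k'
  rcases eq_or_ne k k' with rfl | h
  · simp [oneHot, mul_apply, Fintype.sum_prod_type]
  · simp [oneHot, mul_apply, Fintype.sum_prod_type, h, h.symm]

theorem centering_transpose : (centering K)ᵀ = centering K := by
  rw [centering, transpose_sub, transpose_one, transpose_smul]
  rfl

theorem centering_mul_self (hK : (K : ℝ) ≠ 0) : centering K * centering K = centering K := by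
  ext k k'
  by_cases h : k = k' <;>
    simp [centering, mul_apply, one_apply, h, sub_mul, mul_sub, sum_sub_distrib] <;>
    field_simp <;> ring

theorem trace_centering (hK : (K : ℝ) ≠ 0) : trace (centering K) = K - 1 := by
  simp [centering, trace, hK]

theorem centeredLabels_apply (k : Fin K) (p : Fin K × Fin n) :
    centeredLabels K n k p = centering K k p.1 := by
  simp [centeredLabels, oneHot, mul_apply]

theorem centeredLabels_eq : centeredLabels K n =
    of fun (k : Fin K) (p : Fin K × Fin n) => (if k = p.1 then (1 : ℝ) else 0) - 1 / (K : ℝ) := by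
  ext k p
  simp [centeredLabels_apply, centering, one_apply]

theorem oneHot_eq_centeredLabels_add :
    oneHot K n = centeredLabels K n + of fun _ _ => 1 / (K : ℝ) := by
  ext k p
  simp [centeredLabels_eq, oneHot, eq_comm]

theorem sum_centeredLabels_row (hK : (K : ℝ) ≠ 0) (k : Fin K) :
    ∑ p, centeredLabels K n k p = 0 := by
  simp only [centeredLabels_apply, Fintype.sum_prod_type, sum_const, card_univ,
    Fintype.card_fin, nsmul_eq_mul, ← mul_sum]
  simp [centering, sum_sub_distrib, one_apply, hK]

theorem of_mul_centeredLabels_transpose (hK : (K : ℝ) ≠ 0) (b : Fin K → ℝ) :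
    (of fun k (_ : Fin K × Fin n) => b k) * (centeredLabels K n)ᵀ = 0 := by
  ext k k'
  simp only [mul_apply, of_apply, transpose_apply, ← Finset.mul_sum, sum_centeredLabels_row hK,
    mul_zero, Matrix.zero_apply]

theorem oneHot_mul_centeredLabels_transpose :
    oneHot K n * (centeredLabels K n)ᵀ = (n : ℝ) • centering K := by
  rw [centeredLabels, transpose_mul, centering_transpose, ← Matrix.mul_assoc,
    oneHot_mul_transpose, Matrix.smul_mul, Matrix.one_mul]

theorem centeredLabels_mul_transpose (hK : (K : ℝ) ≠ 0) :
    centeredLabels K n * (centeredLabels K n)ᵀ = (n : ℝ) • centering K := by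
  rw [centeredLabels, Matrix.mul_assoc, ← centeredLabels, oneHot_mul_centeredLabels_transpose,
    Matrix.mul_smul, centering_mul_self hK]

theorem centering_mul_centeredLabels (hK : (K : ℝ) ≠ 0) :
    centering K * centeredLabels K n = centeredLabels K n := by
  rw [centeredLabels, ← Matrix.mul_assoc, centering_mul_self hK]

theorem centeredLabels_mul_transpose_mul (hK : (K : ℝ) ≠ 0) :
    centeredLabels K n * (centeredLabels K n)ᵀ * centeredLabels K n
      = (n : ℝ) • centeredLabels K n := by
  rw [centeredLabels_mul_transpose hK, Matrix.smul_mul, centering_mul_centeredLabels hK]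

theorem oneHot_mul_transpose_mul (hK : (K : ℝ) ≠ 0) :
    oneHot K n * (centeredLabels K n)ᵀ * centeredLabels K n = (n : ℝ) • centeredLabels K n := by
  rw [oneHot_mul_centeredLabels_transpose, Matrix.smul_mul, centering_mul_centeredLabels hK]

theorem trace_oneHot_mul_centeredLabels_transpose (hK : (K : ℝ) ≠ 0) :
    trace (oneHot K n * (centeredLabels K n)ᵀ) = n * (K - 1) := by
  rw [oneHot_mul_centeredLabels_transpose, trace_smul, trace_centering hK, smul_eq_mul]

theorem frobSq_centeredLabels (hK : (K : ℝ) ≠ 0) :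
    frobSq (centeredLabels K n) = n * (K - 1) := by
  rw [frobSq_eq_trace, centeredLabels_mul_transpose hK, trace_smul, trace_centering hK,
    smul_eq_mul]

end Labels

section Loss

variable {K n : ℕ} {q : Type*} [Fintype q]

variable (K n) in
def ufmLoss (lW lH : ℝ) (W : Matrix (Fin K) q ℝ) (H : Matrix q (Fin K × Fin n) ℝ)
    (b : Fin K → ℝ) : ℝ :=
  1 / (2 * (K : ℝ) * (n : ℝ)) *
      frobSq (W * H + of (fun k (_ : Fin K × Fin n) => b k) - oneHot K n)
    + lW / 2 * frobSq W + lH / 2 * frobSq H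

theorem trace_residual_mul_centeredLabels_transpose (hK : (K : ℝ) ≠ 0)
    (W : Matrix (Fin K) q ℝ) (H : Matrix q (Fin K × Fin n) ℝ) (b : Fin K → ℝ) :
    trace ((W * H + of (fun k (_ : Fin K × Fin n) => b k) - oneHot K n) * (centeredLabels K n)ᵀ)
      = trace (W * H * (centeredLabels K n)ᵀ) - n * (K - 1) := by
  rw [Matrix.sub_mul, Matrix.add_mul, of_mul_centeredLabels_transpose hK, trace_sub, trace_add,
    trace_zero, add_zero, trace_oneHot_mul_centeredLabels_transpose hK]

theorem ufmLoss_eq (hK : (K : ℝ) ≠ 0) (hn : (n : ℝ) ≠ 0) {s t c : ℝ}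
    (hc : c = K * n * s * t) (W : Matrix (Fin K) q ℝ) (H : Matrix q (Fin K × Fin n) ℝ)
    (b : Fin K → ℝ) :
    ufmLoss K n (s ^ 2) (n * t ^ 2) W H b =
      1 / (2 * K * n) * frobSq (W * H + of (fun k (_ : Fin K × Fin n) => b k) - oneHot K n
          + c • centeredLabels K n)
        + 1 / 2 * frobSq (s • Wᵀ - t • (H * (centeredLabels K n)ᵀ))
        + n * t ^ 2 / 2 *
          frobSq (H - (n : ℝ)⁻¹ • (H * (centeredLabels K n)ᵀ * centeredLabels K n))
        + (c * (K - 1) / K - c ^ 2 * (K - 1) / (2 * K)) := by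
  have hsos := regularizer_sub_trace_eq_sum_frobSq hn (centeredLabels_mul_transpose_mul hK) s t W H
  rw [ufmLoss, frobSq_add, transpose_smul, Matrix.mul_smul, trace_smul, smul_eq_mul,
    trace_residual_mul_centeredLabels_transpose hK, frobSq_smul, frobSq_centeredLabels hK, hc]
  generalize frobSq (H - (n : ℝ)⁻¹ • (H * (centeredLabels K n)ᵀ * centeredLabels K n)) = z
    at hsos ⊢
  field_simp
  linear_combination (K * n : ℝ) * hsos

theorem exists_ufmLoss_eq [DecidableEq q] (e : Fin K ↪ q) (hK : (K : ℝ) ≠ 0) (hn : 0 < (n : ℝ))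
    {s t c : ℝ} (hs : 0 < s) (ht : 0 < t) (hc : c = K * n * s * t) (hc1 : c ≤ 1) :
    ∃ (W : Matrix (Fin K) q ℝ) (H : Matrix q (Fin K × Fin n) ℝ) (b : Fin K → ℝ),
      ufmLoss K n (s ^ 2) (n * t ^ 2) W H b
      = c * (K - 1) / K - c ^ 2 * (K - 1) / (2 * K) := by
  set E := (1 : Matrix q q ℝ).submatrix e id
  have hE : E * Eᵀ = 1 := submatrix_one_mul_transpose e.injective
  -- `u` makes `(n t u) (s u) = 1 - c` and `s (n t u) = n t (s u)`, killing the first two squares.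
  set u := √((1 - c) / (n * s * t))
  have hu : n * s * t * u ^ 2 = 1 - c := by
    rw [Real.sq_sqrt (div_nonneg (by linarith) (by positivity))]
    field_simp
  set W := (n * t * u) • (centering K * E)
  set H := (s * u) • (Eᵀ * centeredLabels K n)
  have hWH : W * H = (1 - c) • centeredLabels K n := by
    rw [Matrix.smul_mul, Matrix.mul_smul, smul_smul, Matrix.mul_assoc, ← Matrix.mul_assoc E, hE,
      Matrix.one_mul, centering_mul_centeredLabels hK, ← hu]
    congr 1; ring
  have h1 : W * H + of (fun _ (_ : Fin K × Fin n) => 1 / (K : ℝ)) - oneHot K n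
      + c • centeredLabels K n = 0 := by
    rw [hWH, oneHot_eq_centeredLabels_add]
    module
  have h2 : s • Wᵀ - t • (H * (centeredLabels K n)ᵀ) = 0 := by
    simp only [W, H, transpose_smul, transpose_mul, centering_transpose, Matrix.smul_mul,
      Matrix.mul_assoc, centeredLabels_mul_transpose hK, Matrix.mul_smul, smul_smul]
    rw [sub_eq_zero]
    congr 1; ring
  have h3 : H - (n : ℝ)⁻¹ • (H * (centeredLabels K n)ᵀ * centeredLabels K n) = 0 := by
    simp only [H]
    rw [Matrix.smul_mul, Matrix.smul_mul, Matrix.mul_assoc Eᵀ, Matrix.mul_assoc Eᵀ,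
      centeredLabels_mul_transpose_mul hK, Matrix.mul_smul, smul_smul, smul_smul]
    rw [sub_eq_zero]
    congr 1; field_simp
  refine ⟨W, H, fun _ => 1 / K, ?_⟩
  rw [ufmLoss_eq hK hn.ne' hc, h1, h2, h3]
  simp [frobSq]

end Loss

section Minimizers

variable {K n : ℕ} {q : Type*} [Fintype q]

theorem residuals_eq_zero_of_ufmLoss_le (hK : 0 < (K : ℝ)) (hn : 0 < (n : ℝ)) {s t c : ℝ}
    (ht : t ≠ 0) (hc : c = K * n * s * t) {W : Matrix (Fin K) q ℝ}
    {H : Matrix q (Fin K × Fin n) ℝ} {b : Fin K → ℝ}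
    (h : ufmLoss K n (s ^ 2) (n * t ^ 2) W H b ≤ c * (K - 1) / K - c ^ 2 * (K - 1) / (2 * K)) :
    W * H + of (fun k (_ : Fin K × Fin n) => b k) - oneHot K n + c • centeredLabels K n = 0 ∧
      s • Wᵀ = t • (H * (centeredLabels K n)ᵀ) ∧
      H = (n : ℝ)⁻¹ • (H * (centeredLabels K n)ᵀ * centeredLabels K n) := by
  rw [ufmLoss_eq hK.ne' hn.ne' hc] at h
  set x := frobSq (W * H + of (fun k (_ : Fin K × Fin n) => b k) - oneHot K n
    + c • centeredLabels K n)
  set y := frobSq (s • Wᵀ - t • (H * (centeredLabels K n)ᵀ))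
  set z := frobSq (H - (n : ℝ)⁻¹ • (H * (centeredLabels K n)ᵀ * centeredLabels K n))
  have hx : 0 ≤ x := frobSq_nonneg _
  have hy : 0 ≤ y := frobSq_nonneg _
  have hz : 0 ≤ z := frobSq_nonneg _
  have hcx : 0 < 1 / (2 * K * n : ℝ) := by positivity
  have hcz : 0 < n * t ^ 2 / 2 := by positivity
  have hx0 : x = 0 := by nlinarith [mul_nonneg hcx.le hx, mul_nonneg hcz.le hz]
  have hy0 : y = 0 := by nlinarith [mul_nonneg hcx.le hx, mul_nonneg hcz.le hz]
  have hz0 : z = 0 := by nlinarith [mul_nonneg hcx.le hx, mul_nonneg hcz.le hz]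
  exact ⟨frobSq_eq_zero_iff.mp hx0, sub_eq_zero.mp (frobSq_eq_zero_iff.mp hy0),
    sub_eq_zero.mp (frobSq_eq_zero_iff.mp hz0)⟩

theorem mul_eq_of_residuals_eq_zero (hK : (K : ℝ) ≠ 0) (hn : (n : ℝ) ≠ 0) {c : ℝ}
    {W : Matrix (Fin K) q ℝ} {H : Matrix q (Fin K × Fin n) ℝ} {b : Fin K → ℝ}
    (hfit : W * H + of (fun k (_ : Fin K × Fin n) => b k) - oneHot K n
      + c • centeredLabels K n = 0)
    (hH : H = (n : ℝ)⁻¹ • (H * (centeredLabels K n)ᵀ * centeredLabels K n)) :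
    W * H = (1 - c) • centeredLabels K n := by
  have hWH : W * H
      = oneHot K n - c • centeredLabels K n - of fun k (_ : Fin K × Fin n) => b k := by
    rw [← sub_eq_zero, ← hfit]
    abel
  calc W * H = (n : ℝ)⁻¹ • (W * H * (centeredLabels K n)ᵀ * centeredLabels K n) := by
        conv_lhs => rw [hH]
        simp only [Matrix.mul_smul, Matrix.mul_assoc]
    _ = (n : ℝ)⁻¹ • ((n : ℝ) • centeredLabels K n - c • (n : ℝ) • centeredLabels K n) := by
        rw [hWH, Matrix.sub_mul, Matrix.sub_mul, Matrix.sub_mul, Matrix.sub_mul,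
          of_mul_centeredLabels_transpose hK, Matrix.zero_mul, sub_zero, Matrix.smul_mul,
          Matrix.smul_mul, oneHot_mul_transpose_mul hK, centeredLabels_mul_transpose_mul hK]
    _ = (1 - c) • centeredLabels K n := by
        rw [smul_smul, ← sub_smul, smul_smul]
        congr 1
        field_simp

theorem mul_transpose_eq_of_mul_eq (hK : (K : ℝ) ≠ 0) {s t c : ℝ} (hs : s ≠ 0)
    {W : Matrix (Fin K) q ℝ} {H : Matrix q (Fin K × Fin n) ℝ}
    (hWH : W * H = (1 - c) • centeredLabels K n)
    (hW : s • Wᵀ = t • (H * (centeredLabels K n)ᵀ)) :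
    W * Wᵀ = (t / s * (1 - c) * n) • centering K := by
  have hWt : Wᵀ = (t / s) • (H * (centeredLabels K n)ᵀ) := by
    rw [div_eq_inv_mul, ← smul_smul, ← hW, smul_smul, inv_mul_cancel₀ hs, one_smul]
  rw [hWt, Matrix.mul_smul, ← Matrix.mul_assoc, hWH, Matrix.smul_mul,
    centeredLabels_mul_transpose hK, smul_smul, smul_smul, mul_assoc]

theorem mul_transpose_eq_and_mul_eq_of_minimizer [DecidableEq q] (e : Fin K ↪ q) (hK : 0 < (K : ℝ))
    (hn : 0 < (n : ℝ)) {s t c : ℝ} (hs : 0 < s) (ht : 0 < t) (hc : c = K * n * s * t)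
    (hc1 : c ≤ 1) {W : Matrix (Fin K) q ℝ} {H : Matrix q (Fin K × Fin n) ℝ} {b : Fin K → ℝ}
    (hmin : ∀ (W' : Matrix (Fin K) q ℝ) H' b', ufmLoss K n (s ^ 2) (n * t ^ 2) W H b
      ≤ ufmLoss K n (s ^ 2) (n * t ^ 2) W' H' b') :
    W * Wᵀ = (t / s * (1 - c) * n) • centering K ∧ W * H = (1 - c) • centeredLabels K n := by
  obtain ⟨W₀, H₀, b₀, hbound⟩ := exists_ufmLoss_eq e hK.ne' hn hs ht hc hc1
  obtain ⟨hfit, hW, hH⟩ :=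
    residuals_eq_zero_of_ufmLoss_le hK hn ht.ne' hc ((hmin W₀ H₀ b₀).trans_eq hbound)
  have hWH := mul_eq_of_residuals_eq_zero hK.ne' hn.ne' hfit hH
  exact ⟨mul_transpose_eq_of_mul_eq hK.ne' hs.ne' hWH hW, hWH⟩

end Minimizers

/-- Consequence of Theorem 2 (UFM with regularized MSE loss, unregularized bias):
for `c := K√(nλ_H λ_W) ≤ 1` and `ρ := ((1−c)(K−1)/K)√(λ_W/(nλ_H))`, any global minimizer
`(W*, H*, b*)` satisfies `W*W*ᵀ = (nλ_H/λ_W)·ρ·(K/(K−1))·(I_K − (1/K)1_K1_Kᵀ)` and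
`W*H* = √(nλ_H/λ_W)·ρ·(K/(K−1))·((I_K − (1/K)1_K1_Kᵀ) ⊗ 1_nᵀ)`. -/
theorem ufm_mse_unregBias_WWt_WH
    (K d n : ℕ) (hK : 2 ≤ K) (hd : K ≤ d) (hn : 1 ≤ n)
    (lW lH : ℝ) (hlW : 0 < lW) (hlH : 0 < lH)
    (c : ℝ) (hc : c = (K : ℝ) * Real.sqrt ((n : ℝ) * lH * lW)) (hc1 : c ≤ 1)
    (ρ : ℝ) (hρ : ρ = (1 - c) * ((K : ℝ) - 1) / (K : ℝ) * Real.sqrt (lW / ((n : ℝ) * lH)))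
    (Y : Matrix (Fin K) (Fin K × Fin n) ℝ)
    (hY : ∀ k p, Y k p = if p.1 = k then 1 else 0)
    (g : Matrix (Fin K) (Fin d) ℝ → Matrix (Fin d) (Fin K × Fin n) ℝ → (Fin K → ℝ) → ℝ)
    (hg : ∀ W H b, g W H b =
      1 / (2 * (K : ℝ) * (n : ℝ)) *
          frobSq (W * H + Matrix.of (fun k (_ : Fin K × Fin n) => b k) - Y)
        + lW / 2 * frobSq W + lH / 2 * frobSq H)
    (Ws : Matrix (Fin K) (Fin d) ℝ) (Hs : Matrix (Fin d) (Fin K × Fin n) ℝ)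
    (bs : Fin K → ℝ)
    (hmin : ∀ W H b, g Ws Hs bs ≤ g W H b) :
    Ws * Wsᵀ = ((n : ℝ) * lH / lW * ρ * ((K : ℝ) / ((K : ℝ) - 1))) •
        ((1 : Matrix (Fin K) (Fin K) ℝ)
          - (1 / (K : ℝ)) • Matrix.of (fun _ _ : Fin K => (1 : ℝ))) ∧
    Ws * Hs = (Real.sqrt ((n : ℝ) * lH / lW) * ρ * ((K : ℝ) / ((K : ℝ) - 1))) •
        Matrix.of (fun (k : Fin K) (p : Fin K × Fin n) =>
          (if k = p.1 then (1 : ℝ) else 0) - 1 / (K : ℝ)) := by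
  have hK0 : (0 : ℝ) < K := Nat.cast_pos.mpr (by omega)
  have hK1 : (K : ℝ) - 1 ≠ 0 := (sub_pos.mpr (by exact_mod_cast hK)).ne'
  have hn0 : (0 : ℝ) < n := Nat.cast_pos.mpr hn
  obtain rfl : Y = oneHot K n := Matrix.ext hY
  set s := √lW
  set t := √(lH / n)
  have hs : 0 < s := Real.sqrt_pos.mpr hlW
  have ht : 0 < t := Real.sqrt_pos.mpr (by positivity)
  have hlW' : s ^ 2 = lW := Real.sq_sqrt hlW.le
  have hlH' : n * t ^ 2 = lH := by
    rw [Real.sq_sqrt (by positivity)]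
    field_simp
  have hsqrt {x y : ℝ} (hy : 0 < y) (h : y * y = x) : √x = y :=
    (Real.sqrt_eq_iff_mul_self_eq_of_pos hy).mpr h
  have hcst : c = K * n * s * t := by
    rw [hc, hsqrt (by positivity) (by rw [← hlW', ← hlH']; ring : n * s * t * (n * s * t) = _)]
    ring
  obtain ⟨hWW, hWH⟩ := mul_transpose_eq_and_mul_eq_of_minimizer (Fin.castLEEmb hd) hK0 hn0 hs ht hcst hc1
    (fun W H b => by simpa only [ufmLoss, hlW', hlH', hg] using hmin W H b)
  have hρ' : ρ * (K / (K - 1)) = (1 - c) * (s / (n * t)) := by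
    rw [hρ, hsqrt (by positivity)
      (by rw [← hlW', ← hlH']; field_simp : s / (n * t) * (s / (n * t)) = _)]
    field_simp
  refine ⟨?_, ?_⟩
  · rw [hWW, mul_assoc _ ρ, hρ', ← hlW', ← hlH']
    congr 1
    field_simp
  · rw [hWH, centeredLabels_eq, mul_assoc _ ρ, hρ',
      hsqrt (by positivity) (by rw [← hlW', ← hlH']; field_simp : n * t / s * (n * t / s) = _)]
    congr 1
    field_simp
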